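/- arXiv:math/0406236 — 2 statements merged into one kernel-verified Lean document; each statement's English description precedes it below -/
import Mathlib

section
/- The constant L₂ = 1 − Σ_{n=0}^{∞} Γ'(n+1)/Γ(n+1)² satisfies L₂ = 1 + e·Ei(−1), where Ei is the exponential integral. -/
/-!
Since `Γ'(n+1) = n! (H_n - γ)`, the series equals `∑ H_n/n! - γ e`. Writing
`H_n = ∫₀¹ ∑_{k<n} (1-v)^k dv` and summing the exponential series under the integral gives
`∑ H_n/n! = e ∫₀¹ (1 - e^{-t})/t dt`. On the other hand `-γ = Γ'(1) = ∫₀^∞ log t e^{-t} dt`, and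
integrating by parts separately on `(0,1]` and `[1,∞)` yields
`γ = ∫₀¹ (1 - e^{-t})/t dt - ∫₁^∞ e^{-t}/t dt`. The integrals over `(0,1]` cancel, leaving
`e ∫₁^∞ e^{-t}/t dt = -e Ei(-1)`.
-/

open MeasureTheory

/-- `Ei(-1) = -∫_1^∞ e^{-t}/t dt`. -/
noncomputable def EiNegOne : ℝ := -∫ t in Set.Ioi (1 : ℝ), Real.exp (-t) / t

open Real Set Filter Topology
open scoped Nat

theorem integral_log_mul_exp_neg_Ioi_zero :
    ∫ t in Ioi (0 : ℝ), log t * exp (-t) = -eulerMascheroniConstant := by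
  have hGamma : Complex.Gamma =ᶠ[𝓝 1] Complex.GammaIntegral := by
    filter_upwards [(isOpen_lt continuous_const Complex.continuous_re).mem_nhds
      (by simp : (0 : ℝ) < (1 : ℂ).re)] with s hs using Complex.Gamma_eq_integral hs
  have hderiv := ((Complex.hasDerivAt_GammaIntegral (s := 1) (by simp)).congr_of_eventuallyEq
    hGamma).unique Complex.hasDerivAt_Gamma_one
  simp only [sub_self, Complex.cpow_zero, one_mul] at hderiv
  apply Complex.ofReal_injective
  rw [← integral_complex_ofReal, Complex.ofReal_neg, ← hderiv]
  simp only [Complex.ofReal_mul]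

theorem intervalIntegrable_log_mul_exp_neg (a b : ℝ) :
    IntervalIntegrable (fun t => log t * exp (-t)) volume a b :=
  intervalIntegral.intervalIntegrable_log'.mul_continuousOn (by fun_prop)

theorem integrableOn_log_mul_exp_neg_Ioi_one :
    IntegrableOn (fun t => log t * exp (-t)) (Ioi 1) := by
  refine ((GammaIntegral_convergent two_pos).mono_set (Ioi_subset_Ioi zero_le_one)).mono'
    (by fun_prop) ?_
  filter_upwards [ae_restrict_mem measurableSet_Ioi] with t (ht : 1 < t)
  rw [norm_mul, norm_of_nonneg (log_nonneg ht.le), norm_of_nonneg (exp_pos _).le, mul_comm,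
    show (2 : ℝ) - 1 = 1 by norm_num, rpow_one]
  exact mul_le_mul_of_nonneg_left ((log_le_sub_one_of_pos (by linarith)).trans (by linarith))
    (exp_pos _).le

theorem intervalIntegrable_one_sub_exp_neg_div :
    IntervalIntegrable (fun t => (1 - exp (-t)) / t) volume 0 1 := by
  rw [intervalIntegrable_iff_integrableOn_Ioc_of_le zero_le_one]
  refine (integrableOn_const (C := (1 : ℝ)) measure_Ioc_lt_top.ne).mono' ?_ ?_
  · exact (ContinuousOn.div (by fun_prop) continuousOn_id fun t ht => ht.1.ne').aestronglyMeasurable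
      measurableSet_Ioc
  filter_upwards [ae_restrict_mem measurableSet_Ioc] with t ht
  rw [norm_div, norm_of_nonneg (by linarith [exp_le_one_iff.2 (neg_nonpos.2 ht.1.le)]),
    norm_of_nonneg ht.1.le, div_le_one ht.1]
  linarith [add_one_le_exp (-t)]

theorem integrableOn_exp_neg_div_Ioi_one : IntegrableOn (fun t => exp (-t) / t) (Ioi 1) := by
  refine (integrableOn_exp_neg_Ioi 1).mono' ?_ ?_
  · exact (ContinuousOn.div (by fun_prop) continuousOn_id
      fun t (ht : 1 < t) => by positivity).aestronglyMeasurable measurableSet_Ioi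
  filter_upwards [ae_restrict_mem measurableSet_Ioi] with t (ht : 1 < t)
  rw [norm_div, norm_of_nonneg (exp_pos _).le, norm_of_nonneg (by linarith)]
  exact div_le_self (exp_pos _).le ht.le

theorem integral_log_mul_exp_neg_zero_one :
    ∫ t in (0 : ℝ)..1, log t * exp (-t) = -∫ t in (0 : ℝ)..1, (1 - exp (-t)) / t := by
  set G : ℝ → ℝ := fun t => (1 - exp (-t)) * log t
  have hG : ∀ t ∈ Ioo (0 : ℝ) 1,
      HasDerivAt G (log t * exp (-t) + (1 - exp (-t)) / t) t := fun t ht => by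
    refine (((hasDerivAt_neg' t).exp.const_sub 1).mul (hasDerivAt_log ht.1.ne')).congr_deriv ?_
    ring
  have hG_zero : Tendsto G (𝓝[>] 0) (𝓝 0) := by
    have htlog : Tendsto (fun t => t * log t) (𝓝[>] 0) (𝓝 0) := by
      simpa using continuous_mul_log.tendsto 0 |>.mono_left nhdsWithin_le_nhds
    refine squeeze_zero_norm' ?_ (by simpa using htlog.norm)
    filter_upwards [self_mem_nhdsWithin] with t (ht : 0 < t)
    rw [norm_mul, norm_of_nonneg (r := 1 - _) (by simp [ht.le]), abs_of_pos ht, norm_eq_abs]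
    exact mul_le_mul_of_nonneg_right (by linarith [add_one_le_exp (-t)]) (abs_nonneg _)
  have hG_one : Tendsto G (𝓝[<] 1) (𝓝 0) := by
    have hG_cont : ContinuousAt G 1 := by fun_prop (disch := norm_num)
    simpa [G] using hG_cont.tendsto.mono_left nhdsWithin_le_nhds
  have hFTC := intervalIntegral.integral_eq_sub_of_hasDerivAt_of_tendsto zero_lt_one hG
    ((intervalIntegrable_log_mul_exp_neg 0 1).add intervalIntegrable_one_sub_exp_neg_div)
    hG_zero hG_one
  rw [intervalIntegral.integral_add (intervalIntegrable_log_mul_exp_neg 0 1)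
    intervalIntegrable_one_sub_exp_neg_div, sub_zero] at hFTC
  linarith

theorem integral_log_mul_exp_neg_Ioi_one :
    ∫ t in Ioi (1 : ℝ), log t * exp (-t) = ∫ t in Ioi (1 : ℝ), exp (-t) / t := by
  have hH : ∀ t ∈ Ici (1 : ℝ), HasDerivAt (fun t => -(log t * exp (-t)))
      (log t * exp (-t) - exp (-t) / t) t := fun t ht => by
    refine ((hasDerivAt_log (by linarith [ht.out] : t ≠ 0)).mul
      (hasDerivAt_neg' t).exp).neg.congr_deriv ?_
    ring
  have hH_top : Tendsto (fun t => -(log t * exp (-t))) atTop (𝓝 0) := by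
    have hdecay : Tendsto (fun t => log t * exp (-t)) atTop (𝓝 0) := by
      refine squeeze_zero' ?_ ?_ (by simpa using tendsto_pow_mul_exp_neg_atTop_nhds_zero 1)
      · filter_upwards [eventually_ge_atTop 1] with t ht
        exact mul_nonneg (log_nonneg ht) (exp_pos _).le
      · filter_upwards [eventually_gt_atTop 0] with t ht
        exact mul_le_mul_of_nonneg_right ((log_le_sub_one_of_pos ht).trans (by linarith))
          (exp_pos _).le
    simpa using hdecay.neg
  have hFTC := integral_Ioi_of_hasDerivAt_of_tendsto' hH
    (integrableOn_log_mul_exp_neg_Ioi_one.sub integrableOn_exp_neg_div_Ioi_one) hH_top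
  rw [integral_sub integrableOn_log_mul_exp_neg_Ioi_one integrableOn_exp_neg_div_Ioi_one] at hFTC
  simp only [log_one, zero_mul, neg_zero, sub_zero] at hFTC
  linarith

theorem eulerMascheroniConstant_eq_integral :
    eulerMascheroniConstant =
      (∫ t in (0 : ℝ)..1, (1 - exp (-t)) / t) - ∫ t in Ioi (1 : ℝ), exp (-t) / t := by
  have hsplit := setIntegral_union (Ioc_disjoint_Ioi le_rfl) measurableSet_Ioi
    ((intervalIntegrable_iff_integrableOn_Ioc_of_le zero_le_one).1
      (intervalIntegrable_log_mul_exp_neg 0 1)) integrableOn_log_mul_exp_neg_Ioi_one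
  rw [Ioc_union_Ioi_eq_Ioi zero_le_one, integral_log_mul_exp_neg_Ioi_zero,
    ← intervalIntegral.integral_of_le zero_le_one, integral_log_mul_exp_neg_zero_one,
    integral_log_mul_exp_neg_Ioi_one] at hsplit
  linarith

theorem Real.hasSum_pow_div_factorial (x : ℝ) : HasSum (fun n => x ^ n / n !) (exp x) := by
  rw [exp_eq_exp_ℝ]
  exact NormedSpace.expSeries_div_hasSum_exp x

theorem hasSum_geom_sum_div_factorial {x : ℝ} (hx : x ≠ 1) :
    HasSum (fun n => (∑ k ∈ Finset.range n, x ^ k) / n !) ((exp x - exp 1) / (x - 1)) := by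
  refine (((hasSum_pow_div_factorial x).sub (hasSum_pow_div_factorial 1)).div_const
    (x - 1)).congr_fun fun n => ?_
  rw [geom_sum_eq hx, one_pow]
  ring

theorem harmonic_eq_integral (n : ℕ) :
    (harmonic n : ℝ) = ∫ v in (0 : ℝ)..1, ∑ k ∈ Finset.range n, (1 - v) ^ k := by
  rw [intervalIntegral.integral_finsetSum fun k _ => (by fun_prop : Continuous
    fun v : ℝ => (1 - v) ^ k).intervalIntegrable 0 1, harmonic]
  push_cast
  refine Finset.sum_congr rfl fun k _ => ?_
  rw [intervalIntegral.integral_comp_sub_left (fun v => v ^ k), integral_pow]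
  simp

theorem harmonic_le_self (n : ℕ) : harmonic n ≤ n := by
  simpa [harmonic] using Finset.sum_le_card_nsmul (Finset.range n) (fun i => ((i + 1 : ℕ) : ℚ)⁻¹) 1
    fun i _ => inv_le_one_of_one_le₀ (by simp)

theorem summable_harmonic_div_factorial : Summable fun n => (harmonic n : ℝ) / n ! := by
  refine (summable_pow_div_factorial 2).of_nonneg_of_le (fun n => ?_) fun n => ?_
  · have : (0 : ℚ) ≤ harmonic n := Finset.sum_nonneg fun i _ => by positivity
    positivity
  · gcongr
    exact (Rat.cast_le.2 (harmonic_le_self n)).trans (by exact_mod_cast Nat.lt_two_pow_self.le)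

theorem tsum_harmonic_div_factorial :
    ∑' n, (harmonic n : ℝ) / n ! = exp 1 * ∫ t in (0 : ℝ)..1, (1 - exp (-t)) / t := by
  set F : ℕ → ℝ → ℝ := fun n v => (∑ k ∈ Finset.range n, (1 - v) ^ k) / (n ! : ℝ)
  have hF_int : ∀ n, Integrable (F n) (volume.restrict (Ioc 0 1)) := fun n =>
    (by fun_prop : Continuous (F n)).integrableOn_Ioc
  have hF_integral : ∀ n, ∫ v in Ioc 0 1, F n v = (harmonic n : ℝ) / n ! := fun n => by
    rw [integral_div, ← intervalIntegral.integral_of_le zero_le_one, harmonic_eq_integral]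
  have hF_norm : ∀ n, ∫ v in Ioc 0 1, ‖F n v‖ = (harmonic n : ℝ) / n ! := fun n => by
    rw [← hF_integral]
    refine setIntegral_congr_fun measurableSet_Ioc fun v hv => norm_of_nonneg ?_
    have : 0 ≤ 1 - v := by linarith [hv.2]
    positivity
  have hF_sum : ∀ v ∈ Ioc (0 : ℝ) 1, ∑' n, F n v = exp 1 * ((1 - exp (-v)) / v) := fun v hv => by
    rw [(hasSum_geom_sum_div_factorial (x := 1 - v) (by linarith [hv.1])).tsum_eq,
      sub_eq_add_neg 1 v, exp_add]
    field_simp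
    ring
  calc ∑' n, (harmonic n : ℝ) / n ! = ∑' n, ∫ v in Ioc 0 1, F n v := by simp only [hF_integral]
    _ = ∫ v in Ioc 0 1, ∑' n, F n v :=
      integral_tsum_of_summable_integral_norm hF_int
        (by simpa only [hF_norm] using summable_harmonic_div_factorial)
    _ = exp 1 * ∫ t in (0 : ℝ)..1, (1 - exp (-t)) / t := by
      rw [setIntegral_congr_fun measurableSet_Ioc hF_sum, integral_const_mul,
        intervalIntegral.integral_of_le zero_le_one]

theorem deriv_Gamma_div_Gamma_sq_nat (n : ℕ) :
    deriv Gamma (n + 1) / Gamma (n + 1) ^ 2 = (harmonic n - eulerMascheroniConstant) / n ! := by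
  rw [deriv_Gamma_nat, Gamma_nat_eq_factorial]
  field_simp
  ring

/-- `L₂ = 1 - ∑_{n=0}^∞ Γ'(n+1)/Γ(n+1)² = 1 + e·Ei(-1)`. -/
theorem L2_eq :
    1 - (∑' n : ℕ, deriv Real.Gamma (n + 1) / (Real.Gamma (n + 1)) ^ 2) =
      1 + Real.exp 1 * EiNegOne := by
  have hsum : HasSum (fun n : ℕ => deriv Gamma (n + 1) / Gamma (n + 1) ^ 2)
      ((∑' n, (harmonic n : ℝ) / n !) - eulerMascheroniConstant * exp 1) :=
    (summable_harmonic_div_factorial.hasSum.sub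
      ((hasSum_pow_div_factorial 1).mul_left eulerMascheroniConstant)).congr_fun fun n => by
        rw [deriv_Gamma_div_Gamma_sq_nat, one_pow]
        ring
  rw [hsum.tsum_eq, tsum_harmonic_div_factorial, eulerMascheroniConstant_eq_integral, EiNegOne]
  ring
end

section
/- For every natural number n ≥ 2, the residue of the alternating Kurepa function A(z) at z = −n equals (−1)^n · Σ_{k=0}^{n−2} 1/k!. -/
open Filter Topology MeasureTheory

/-- The upper incomplete Gamma function `Γ(a,1) = ∫_1^∞ e^{-t} t^{a-1} dt`. -/
noncomputable def GammaIncAtOne (a : ℂ) : ℂ :=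
  ∫ t in Set.Ioi (1 : ℝ), Real.exp (-t) * (t : ℂ) ^ (a - 1)

/-- The alternating Kurepa function (meromorphic continuation to `ℂ`), via the
representation `A(z) = -(1 + e·Ei(-1))·(-1)^z + e·Γ(z+2)·Γ(-z-1,1)`. -/
noncomputable def altKurepa (z : ℂ) : ℂ :=
  -((1 : ℂ) + Real.exp 1 * EiNegOne) * (-1 : ℂ) ^ z +
    Real.exp 1 * Complex.Gamma (z + 2) * GammaIncAtOne (-z - 1)

/-!
Near `z = -n` the first summand of `altKurepa` is holomorphic, so the residue comes from
`e·Γ(z+2)·Γ(-z-1,1)` alone. With `m = n - 2`, `Γ(z+2)` has residue `(-1)^m/m!` there, while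
`Γ(-z-1,1)` is continuous with value `Γ(m+1,1) = m!·e⁻¹·∑_{k≤m} 1/k!` (repeated integration by
parts). The factors `e` and `m!` cancel.
-/

open Set

namespace Complex

theorem tendsto_add_nat_mul_Gamma_nhdsNE (m : ℕ) :
    Tendsto (fun w : ℂ => (w + m) * Gamma w) (𝓝[≠] (-m)) (𝓝 ((-1) ^ m / m.factorial)) := by
  induction m with
  | zero => simpa using tendsto_self_mul_Gamma_nhds_zero
  | succ m ih =>
    have hm : -((m + 1 : ℕ) : ℂ) ≠ 0 :=
      neg_ne_zero.2 (Nat.cast_ne_zero.2 m.succ_ne_zero)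
    have hshift : Tendsto (· + 1) (𝓝[≠] (-((m + 1 : ℕ) : ℂ))) (𝓝[≠] (-(m : ℂ))) := by
      have h := (Filter.map_add_right_nhdsNE (c := (1 : ℂ)) (a := -((m + 1 : ℕ) : ℂ))).le
      rwa [show -((m + 1 : ℕ) : ℂ) + 1 = -m by push_cast; ring] at h
    have hinv : Tendsto (·⁻¹) (𝓝[≠] (-((m + 1 : ℕ) : ℂ))) (𝓝 (-((m + 1 : ℕ) : ℂ))⁻¹) :=
      (continuousAt_inv₀ hm).tendsto.mono_left nhdsWithin_le_nhds
    have hlim := (ih.comp hshift).mul hinv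
    rw [show (-1 : ℂ) ^ m / m.factorial * (-((m + 1 : ℕ) : ℂ))⁻¹ =
        (-1) ^ (m + 1) / (m + 1).factorial by push_cast [Nat.factorial_succ]; field_simp; ring]
        at hlim
    -- `(w + (m + 1)) Γ(w) = ((w + 1) + m) Γ(w + 1) / w` by the functional equation
    refine hlim.congr' ?_
    filter_upwards [(eventually_ne_nhds hm).filter_mono nhdsWithin_le_nhds] with w hw
    simp only [Function.comp_apply, Gamma_add_one w hw]
    field_simp
    push_cast
    ring

end Complex

theorem tendsto_add_nat_mul_Gamma_add_nat_nhdsNE (m k : ℕ) :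
    Tendsto (fun z : ℂ => (z + ((m + k : ℕ) : ℂ)) * Complex.Gamma (z + k))
      (𝓝[≠] (-((m + k : ℕ) : ℂ))) (𝓝 ((-1) ^ m / m.factorial)) := by
  have hshift : Tendsto (· + (k : ℂ)) (𝓝[≠] (-((m + k : ℕ) : ℂ))) (𝓝[≠] (-(m : ℂ))) := by
    have h := (Filter.map_add_right_nhdsNE (c := (k : ℂ)) (a := -((m + k : ℕ) : ℂ))).le
    rwa [show -((m + k : ℕ) : ℂ) + k = -m by push_cast; ring] at h
  refine ((Complex.tendsto_add_nat_mul_Gamma_nhdsNE m).comp hshift).congr fun z => ?_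
  simp only [Function.comp_apply]
  push_cast
  ring_nf

theorem integrableOn_exp_neg_mul_pow_Ioi {a : ℝ} (ha : 0 ≤ a) (m : ℕ) :
    IntegrableOn (fun t : ℝ => Real.exp (-t) * t ^ m) (Ioi a) := by
  have h := (Real.GammaIntegral_convergent (Nat.cast_add_one_pos m)).mono_set (Ioi_subset_Ioi ha)
  refine h.congr_fun (fun t _ => ?_) measurableSet_Ioi
  simp

theorem integral_exp_neg_mul_pow_succ_Ioi {a : ℝ} (ha : 0 ≤ a) (m : ℕ) :
    ∫ t in Ioi a, Real.exp (-t) * t ^ (m + 1) =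
      Real.exp (-a) * a ^ (m + 1) + (m + 1) * ∫ t in Ioi a, Real.exp (-t) * t ^ m := by
  have hderiv : ∀ t ∈ Ici a, HasDerivAt (fun t : ℝ => -Real.exp (-t) * t ^ (m + 1))
      (Real.exp (-t) * t ^ (m + 1) - (m + 1) * (Real.exp (-t) * t ^ m)) t := by
    intro t _
    refine ((hasDerivAt_neg t).exp.neg.mul (hasDerivAt_pow (m + 1) t)).congr_deriv ?_
    simp only [Pi.neg_apply, add_tsub_cancel_right]
    push_cast
    ring
  have hlim : Tendsto (fun t : ℝ => -Real.exp (-t) * t ^ (m + 1)) atTop (𝓝 0) := by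
    simpa [mul_comm] using (Real.tendsto_pow_mul_exp_neg_atTop_nhds_zero (m + 1)).neg
  have hint := integrableOn_exp_neg_mul_pow_Ioi ha
  have hparts := integral_Ioi_of_hasDerivAt_of_tendsto' hderiv
    ((hint (m + 1)).sub ((hint m).const_mul _)) hlim
  rw [integral_sub (hint (m + 1)) ((hint m).const_mul _), integral_const_mul] at hparts
  linarith

theorem integral_exp_neg_mul_pow_Ioi {a : ℝ} (ha : 0 ≤ a) (m : ℕ) :
    ∫ t in Ioi a, Real.exp (-t) * t ^ m =
      m.factorial * Real.exp (-a) * ∑ k ∈ Finset.range (m + 1), a ^ k / k.factorial := by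
  induction m with
  | zero => simpa using integral_exp_neg_Ioi a
  | succ m ih =>
    rw [integral_exp_neg_mul_pow_succ_Ioi ha, ih, Finset.sum_range_succ _ (m + 1),
      Nat.factorial_succ]
    have : ((m + 1).factorial : ℝ) ≠ 0 := by positivity
    push_cast [Nat.factorial_succ] at this ⊢
    field_simp
    ring

theorem GammaIncAtOne_natCast_add_one (m : ℕ) :
    GammaIncAtOne (m + 1) =
      m.factorial * Real.exp (-1) * ∑ k ∈ Finset.range (m + 1), (1 : ℂ) / k.factorial := by
  calc GammaIncAtOne (m + 1) = ((∫ t in Ioi (1 : ℝ), Real.exp (-t) * t ^ m : ℝ) : ℂ) := by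
        rw [GammaIncAtOne, ← integral_complex_ofReal]
        refine setIntegral_congr_fun measurableSet_Ioi fun t _ => ?_
        simp [← Complex.cpow_natCast]
    _ = _ := by
        rw [integral_exp_neg_mul_pow_Ioi zero_le_one]
        simp

theorem continuous_GammaIncAtOne : Continuous GammaIncAtOne := by
  refine continuous_iff_continuousAt.2 fun a₀ => ?_
  set R := max a₀.re 0
  have hR : a₀.re < R + 1 := by linarith [le_max_left a₀.re 0]
  have hbound : IntegrableOn (fun t : ℝ => Real.exp (-t) * t ^ R) (Ioi 1) := by
    simpa using (Real.GammaIntegral_convergent (s := R + 1) (by positivity)).mono_set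
      (Ioi_subset_Ioi zero_le_one)
  refine continuousAt_of_dominated (bound := fun t => Real.exp (-t) * t ^ R) ?_ ?_ hbound ?_
  · refine .of_forall fun a => ContinuousOn.aestronglyMeasurable (fun t ht => ?_) measurableSet_Ioi
    exact (Complex.continuous_ofReal.comp (Real.continuous_exp.comp continuous_neg)
      ).continuousWithinAt.mul (Complex.continuousAt_ofReal_cpow_const t (a - 1)
        (.inr (zero_lt_one.trans ht).ne')).continuousWithinAt
  · have hnhds : {a : ℂ | a.re < R + 1} ∈ 𝓝 a₀ :=
      (isOpen_lt Complex.continuous_re continuous_const).mem_nhds hR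
    filter_upwards [hnhds] with a ha
    refine (ae_restrict_iff' measurableSet_Ioi).2 (.of_forall fun t ht => ?_)
    rw [norm_mul, Complex.norm_cpow_eq_rpow_re_of_pos (zero_lt_one.trans ht), Complex.norm_real,
      Real.norm_of_nonneg (Real.exp_pos _).le]
    gcongr
    · exact ht.le
    · simp only [Complex.sub_re, Complex.one_re]
      linarith [show a.re < R + 1 from ha]
  · refine (ae_restrict_iff' measurableSet_Ioi).2 (.of_forall fun t ht => ?_)
    exact continuousAt_const.mul ((continuousAt_const_cpow (by exact_mod_cast
      (zero_lt_one.trans ht).ne')).comp (continuousAt_id.sub continuousAt_const))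

/-- For `n ≥ 2`, the residue of `A(z)` at `z = -n` is `(-1)^n ∑_{k=0}^{n-2} 1/k!`. -/
theorem altKurepa_residue (n : ℕ) (hn : 2 ≤ n) :
    Tendsto (fun z : ℂ => (z + (n : ℂ)) * altKurepa z) (𝓝[≠] (-(n : ℂ)))
      (𝓝 ((-1 : ℂ) ^ n * ∑ k ∈ Finset.range (n - 1), (1 : ℂ) / (k.factorial : ℂ))) := by
  obtain ⟨m, rfl⟩ := Nat.exists_eq_add_of_le' hn
  set p : ℂ := -((m + 2 : ℕ) : ℂ)
  have hpole := tendsto_add_nat_mul_Gamma_add_nat_nhdsNE m 2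
  have hzero : Tendsto (fun z : ℂ => z + ((m + 2 : ℕ) : ℂ)) (𝓝[≠] p) (𝓝 0) :=
    tendsto_nhdsWithin_of_tendsto_nhds <| by
      simpa only [p, neg_add_cancel] using (continuous_add_const ((m + 2 : ℕ) : ℂ)).tendsto p
  have hcpow : ContinuousAt (fun z => -((1 : ℂ) + Real.exp 1 * EiNegOne) * (-1 : ℂ) ^ z) p :=
    continuousAt_const.mul (continuousAt_const_cpow (by norm_num))
  have hinc : ContinuousAt (fun z => GammaIncAtOne (-z - 1)) p :=
    (continuous_GammaIncAtOne.comp (by fun_prop)).continuousAt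
  have hlim := (hzero.mul (hcpow.tendsto.mono_left
    nhdsWithin_le_nhds)).add (((tendsto_const_nhds (x := (Real.exp 1 : ℂ))).mul hpole).mul
      (hinc.tendsto.mono_left nhdsWithin_le_nhds))
  convert hlim using 2
  · simp only [altKurepa, Nat.cast_ofNat]
    ring
  · rw [show -p - 1 = (m : ℂ) + 1 by push_cast [p]; ring, GammaIncAtOne_natCast_add_one]
    have hexp : (Real.exp 1 : ℂ) * Real.exp (-1) = 1 := by
      rw [← Complex.ofReal_mul, ← Real.exp_add, add_neg_cancel, Real.exp_zero, Complex.ofReal_one]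
    have hfact : (m.factorial : ℂ) ≠ 0 := Nat.cast_ne_zero.2 m.factorial_ne_zero
    rw [zero_mul, zero_add, show m + 2 - 1 = m + 1 by omega]
    field_simp
    linear_combination
      (-(-1 : ℂ) ^ (m + 2) * ∑ k ∈ Finset.range (m + 1), (1 : ℂ) / k.factorial) * hexp
end
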